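/- arXiv:2001.04194 — 5 statements merged into one kernel-verified Lean document; each statement's English description precedes it below -/
import Mathlib

section
/- Let K, a₁,...,aₙ be positive integers with K > aᵢ for all i, and let bₕ = e_h(a₁,...,aₙ) be the h-th elementary symmetric polynomial. If 1 ≤ h ≤ n−1 and K ≥ (a₁+⋯+aₙ)/(h+1), then b_{h+1}·K^{n−h−1} ≤ bₕ·K^{n−h}. -/
/-! Counting pairs `(t, i)` with `|t| = h` and `i ∉ t` gives
`(h + 1) b_{h+1} ≤ (a₁ + ⋯ + aₙ) b_h ≤ (h + 1) K b_h`, hence `b_{h+1} ≤ K b_h`;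
multiply by `K^(n-h-1)`. -/

/-- The `h`-th elementary symmetric polynomial of `a 0, …, a (n-1)`. -/
def esymm (n : ℕ) (a : Fin n → ℕ) (h : ℕ) : ℕ :=
  ∑ t ∈ Finset.powersetCard h (Finset.univ : Finset (Fin n)), ∏ i ∈ t, a i

open Finset

section

variable {ι : Type*} [DecidableEq ι]

theorem sum_powersetCard_succ_sum_erase {M : Type*} [AddCommMonoid M] (s : Finset ι) (k : ℕ)
    (g : Finset ι → ι → M) :
    ∑ u ∈ s.powersetCard (k + 1), ∑ i ∈ u, g (u.erase i) i =
      ∑ t ∈ s.powersetCard k, ∑ i ∈ s \ t, g t i := by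
  rw [sum_sigma', sum_sigma']
  refine sum_nbij' (fun p ↦ ⟨p.1.erase p.2, p.2⟩) (fun p ↦ ⟨insert p.2 p.1, p.2⟩) ?_ ?_ ?_ ?_ ?_
  · rintro ⟨u, i⟩ hui
    simp only [mem_sigma, mem_powersetCard] at hui ⊢
    obtain ⟨⟨hus, hcard⟩, hi⟩ := hui
    exact ⟨⟨(erase_subset i u).trans hus, by rw [card_erase_of_mem hi, hcard, Nat.add_sub_cancel]⟩,
      mem_sdiff.2 ⟨hus hi, notMem_erase i u⟩⟩
  · rintro ⟨t, i⟩ hti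
    simp only [mem_sigma, mem_powersetCard, mem_sdiff] at hti ⊢
    obtain ⟨⟨hts, hcard⟩, his, hit⟩ := hti
    exact ⟨⟨insert_subset his hts, by rw [card_insert_of_notMem hit, hcard]⟩, mem_insert_self i t⟩
  · rintro ⟨u, i⟩ hui
    simp only [mem_sigma] at hui
    simp [insert_erase hui.2]
  · rintro ⟨t, i⟩ hti
    simp only [mem_sigma, mem_sdiff] at hti
    simp [erase_insert hti.2.2]
  · intro _ _
    rfl

theorem succ_mul_sum_powersetCard_prod {R : Type*} [CommSemiring R] (s : Finset ι) (f : ι → R)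
    (k : ℕ) :
    (k + 1) * ∑ u ∈ s.powersetCard (k + 1), ∏ i ∈ u, f i =
      ∑ t ∈ s.powersetCard k, ∑ i ∈ s \ t, f i * ∏ j ∈ t, f j := by
  rw [← sum_powersetCard_succ_sum_erase, mul_sum]
  refine sum_congr rfl fun u hu ↦ ?_
  rw [sum_congr rfl fun i hi ↦ mul_prod_erase u f hi, sum_const, (mem_powersetCard.1 hu).2,
    nsmul_eq_mul, Nat.cast_succ]

theorem succ_mul_sum_powersetCard_prod_le {R : Type*} [CommSemiring R] [PartialOrder R]
    [IsOrderedRing R] (s : Finset ι) (f : ι → R) (hf : ∀ i ∈ s, 0 ≤ f i) (k : ℕ) :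
    (k + 1) * ∑ u ∈ s.powersetCard (k + 1), ∏ i ∈ u, f i ≤
      (∑ i ∈ s, f i) * ∑ t ∈ s.powersetCard k, ∏ i ∈ t, f i := by
  rw [succ_mul_sum_powersetCard_prod, mul_sum]
  refine sum_le_sum fun t ht ↦ ?_
  rw [← sum_mul]
  have hts := (mem_powersetCard.1 ht).1
  exact mul_le_mul_of_nonneg_right (sum_le_sum_of_subset_of_nonneg sdiff_subset
    fun i hi _ ↦ hf i hi) (prod_nonneg fun j hj ↦ hf j (hts hj))

end

theorem esymm_succ_le_mul (n : ℕ) (a : Fin n → ℕ) (h K : ℕ) (hsum : ∑ i, a i ≤ (h + 1) * K) :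
    esymm n a (h + 1) ≤ K * esymm n a h := by
  refine Nat.le_of_mul_le_mul_left ?_ h.succ_pos
  calc (h + 1) * esymm n a (h + 1) ≤ (∑ i, a i) * esymm n a h :=
        succ_mul_sum_powersetCard_prod_le _ a (fun i _ ↦ Nat.zero_le _) h
    _ ≤ (h + 1) * K * esymm n a h := Nat.mul_le_mul_right _ hsum
    _ = (h + 1) * (K * esymm n a h) := Nat.mul_assoc _ _ _

theorem esymm_pow_le_general (K n : ℕ) (a : Fin n → ℕ) (h : ℕ) (h1 : 1 ≤ h) (h2 : h ≤ n - 1)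
    (hbig : (K : ℚ) ≥ (∑ i, (a i : ℚ)) / (h + 1)) :
    esymm n a (h + 1) * K ^ (n - h - 1) ≤ esymm n a h * K ^ (n - h) := by
  have hsum : ∑ i, a i ≤ (h + 1) * K := by
    rw [ge_iff_le, div_le_iff₀ (by positivity)] at hbig
    exact_mod_cast (by linarith : (∑ i, (a i : ℚ)) ≤ (h + 1) * K)
  obtain ⟨m, hm⟩ : ∃ m, n - h = m + 1 := ⟨n - h - 1, by omega⟩
  rw [hm, Nat.add_sub_cancel, pow_succ', ← mul_assoc, mul_comm (esymm n a h)]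
  exact Nat.mul_le_mul_right _ (esymm_succ_le_mul n a h K hsum)

/-- If `K > aᵢ` for all `i`, `1 ≤ h ≤ n − 1` and `K ≥ (a₁ + ⋯ + aₙ)/(h+1)`, then
`b_{h+1}·K^{n−h−1} ≤ bₕ·K^{n−h}`, where `bₕ` is the `h`-th elementary symmetric
polynomial of the `aᵢ`. -/
theorem esymm_pow_le (K n : ℕ) (hK : 0 < K) (a : Fin n → ℕ) (ha : ∀ i, 0 < a i)
    (haK : ∀ i, a i < K) (h : ℕ) (h1 : 1 ≤ h) (h2 : h ≤ n - 1)
    (hbig : (K : ℚ) ≥ (∑ i, (a i : ℚ)) / (h + 1)) :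
    esymm n a (h + 1) * K ^ (n - h - 1) ≤ esymm n a h * K ^ (n - h) :=
  esymm_pow_le_general K n a h h1 h2 hbig
end

section
/- Let K, r, s be positive integers with s ≥ 2, r ≥ s, rs < K, and K > r + s. Then (r+s−1)/r · [(K−1)(K−2)⋯(K−(s−1))] / [(K−(r+1))(K−(r+2))⋯(K−(r+s−1))] ≤ (r+s−1)/r · (1 + (8r(s−1)K + s²(s−1)²)/(8K² − 4(2r+s)(s−1)K)), provided the denominator 8K² − 4(2r+s)(s−1)K is positive. -/
/-!
Both products are `K ^ (s - 1) * ∏ (1 - cᵢ / K)`. For `xᵢ ∈ [0, 1]` the Weierstrass product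
inequalities `1 - ∑ xᵢ ≤ ∏ (1 - xᵢ) ≤ 1 - ∑ xᵢ + (∑ xᵢ)² / 2` bound the numerator from above and
the denominator from below through the first elementary symmetric function alone. Positivity of
`8K² − 4(2r+s)(s−1)K` is exactly positivity of the denominator bound
`1 - ((s-1)r + (s-1)s/2) / K`, and the quotient of the two bounds is the stated expression.
-/

open Finset

section WeierstrassProduct

variable {ι α : Type*} [Field α] [LinearOrder α] [IsStrictOrderedRing α] (S : Finset ι) {f : ι → α}

theorem Finset.one_sub_sum_le_prod_one_sub (h0 : ∀ i ∈ S, 0 ≤ f i) (h1 : ∀ i ∈ S, f i ≤ 1) :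
    1 - ∑ i ∈ S, f i ≤ ∏ i ∈ S, (1 - f i) := by
  induction S using Finset.cons_induction with
  | empty => simp
  | cons a S ha ih =>
    simp only [forall_mem_cons] at h0 h1
    have hprod_le : ∏ i ∈ S, (1 - f i) ≤ 1 :=
      prod_le_one (fun i hi => sub_nonneg.2 (h1.2 i hi)) fun i hi => sub_le_self _ (h0.2 i hi)
    rw [prod_cons, sum_cons]
    nlinarith [ih h0.2 h1.2, h0.1, h1.1]

theorem Finset.prod_one_sub_le_one_sub_sum_add_sq_div_two (h0 : ∀ i ∈ S, 0 ≤ f i)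
    (h1 : ∀ i ∈ S, f i ≤ 1) :
    ∏ i ∈ S, (1 - f i) ≤ 1 - ∑ i ∈ S, f i + (∑ i ∈ S, f i) ^ 2 / 2 := by
  induction S using Finset.cons_induction with
  | empty => simp
  | cons a S ha ih =>
    simp only [forall_mem_cons] at h0 h1
    have hsum : 0 ≤ ∑ i ∈ S, f i := sum_nonneg h0.2
    rw [prod_cons, sum_cons]
    nlinarith [mul_le_mul_of_nonneg_left (ih h0.2 h1.2) (sub_nonneg.2 h1.1),
      mul_nonneg h0.1 (sq_nonneg (∑ i ∈ S, f i)), sq_nonneg (f a)]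

end WeierstrassProduct

section RatioOfProducts

variable {ι α : Type*} [Field α] [LinearOrder α] [IsStrictOrderedRing α] (S : Finset ι)

omit [LinearOrder α] [IsStrictOrderedRing α] in
theorem Finset.prod_sub_eq_pow_mul_prod_one_sub_div (c : ι → α) {K : α} (hK : K ≠ 0) :
    ∏ i ∈ S, (K - c i) = K ^ #S * ∏ i ∈ S, (1 - c i / K) := by
  rw [← prod_const, ← prod_mul_distrib]
  refine prod_congr rfl fun i _ => ?_
  field_simp

theorem Finset.prod_sub_div_prod_sub_le {c d : ι → α} {K : α} (hc : ∀ i ∈ S, 0 ≤ c i)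
    (hcd : ∀ i ∈ S, c i ≤ d i) (hdK : ∑ i ∈ S, d i < K) :
    (∏ i ∈ S, (K - c i)) / ∏ i ∈ S, (K - d i) ≤
      (1 - (∑ i ∈ S, c i) / K + ((∑ i ∈ S, c i) / K) ^ 2 / 2) / (1 - (∑ i ∈ S, d i) / K) := by
  have hd : ∀ i ∈ S, 0 ≤ d i := fun i hi => (hc i hi).trans (hcd i hi)
  have hK : 0 < K := (sum_nonneg hd).trans_lt hdK
  have hdi : ∀ i ∈ S, d i ≤ K := fun i hi => (single_le_sum hd hi).trans hdK.le
  have hc1 : ∀ i ∈ S, 0 ≤ c i / K ∧ c i / K ≤ 1 := fun i hi =>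
    ⟨div_nonneg (hc i hi) hK.le, (div_le_one hK).2 ((hcd i hi).trans (hdi i hi))⟩
  have hd1 : ∀ i ∈ S, 0 ≤ d i / K ∧ d i / K ≤ 1 := fun i hi =>
    ⟨div_nonneg (hd i hi) hK.le, (div_le_one hK).2 (hdi i hi)⟩
  have hpos : 0 < 1 - (∑ i ∈ S, d i) / K := sub_pos.2 ((div_lt_one hK).2 hdK)
  have hupper := S.prod_one_sub_le_one_sub_sum_add_sq_div_two (fun i hi => (hc1 i hi).1)
    fun i hi => (hc1 i hi).2
  have hlower := S.one_sub_sum_le_prod_one_sub (fun i hi => (hd1 i hi).1) fun i hi => (hd1 i hi).2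
  rw [← sum_div] at hupper hlower
  rw [S.prod_sub_eq_pow_mul_prod_one_sub_div c hK.ne',
    S.prod_sub_eq_pow_mul_prod_one_sub_div d hK.ne', mul_div_mul_left _ _ (pow_ne_zero _ hK.ne')]
  exact div_le_div₀ (by nlinarith [sq_nonneg ((∑ i ∈ S, c i) / K - 1)]) hupper hpos hlower

end RatioOfProducts

theorem Finset.sum_Icc_one_natCast {α : Type*} [Field α] [CharZero α] (m : ℕ) :
    ∑ i ∈ Icc 1 m, (i : α) = m * (m + 1) / 2 := by
  induction m with
  | zero => simp
  | succ n ih =>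
    rw [sum_Icc_succ_top (by omega), ih]
    push_cast
    ring

theorem ratio_product_bound_general (K r s : ℕ) (hs : 2 ≤ s)
    (hden : 0 < 8 * (K : ℚ) ^ 2 - 4 * (2 * r + s) * ((s : ℚ) - 1) * K) :
    (((r : ℚ) + s - 1) / r) *
        ((∏ i ∈ Finset.Icc 1 (s - 1), ((K : ℚ) - i)) /
          (∏ i ∈ Finset.Icc 1 (s - 1), ((K : ℚ) - (r + i)))) ≤
      (((r : ℚ) + s - 1) / r) *
        (1 + (8 * r * ((s : ℚ) - 1) * K + s ^ 2 * ((s : ℚ) - 1) ^ 2) /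
          (8 * (K : ℚ) ^ 2 - 4 * (2 * r + s) * ((s : ℚ) - 1) * K)) := by
  have hm : ((s - 1 : ℕ) : ℚ) = s - 1 := Nat.cast_pred (by omega)
  have hC : ∑ i ∈ Icc 1 (s - 1), (i : ℚ) = (s - 1) * s / 2 := by
    rw [sum_Icc_one_natCast, hm]; ring
  have hD : ∑ i ∈ Icc 1 (s - 1), ((r : ℚ) + i) = (s - 1) * r + (s - 1) * s / 2 := by
    rw [sum_add_distrib, hC, sum_const, Nat.card_Icc, nsmul_eq_mul, Nat.add_sub_cancel, hm]
  have hs1 : (1 : ℚ) ≤ s := by exact_mod_cast (by omega : 1 ≤ s)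
  have hK : 0 < (K : ℚ) := (Nat.cast_nonneg K).lt_of_ne' fun h => by simp [h] at hden
  have hDK : ∑ i ∈ Icc 1 (s - 1), ((r : ℚ) + i) < K := by
    rw [hD]; nlinarith
  have hpos : 0 < 1 - ((s - 1) * r + (s - 1) * s / 2) / (K : ℚ) :=
    sub_pos.2 ((div_lt_one hK).2 (hD ▸ hDK))
  have hratio := (Icc 1 (s - 1)).prod_sub_div_prod_sub_le (c := fun i => (i : ℚ))
    (fun i _ => Nat.cast_nonneg i) (fun i _ => le_add_of_nonneg_left r.cast_nonneg) hDK
  rw [hC, hD] at hratio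
  refine (mul_le_mul_of_nonneg_left hratio (div_nonneg (by linarith) r.cast_nonneg)).trans_eq ?_
  congr 1
  rw [one_add_div hden.ne', div_eq_div_iff hpos.ne' hden.ne']
  field_simp
  ring

/-- Key chain of estimates for `H₁(r,s)`: under `s ≥ 2`, `r ≥ s`, `rs < K`,
`K > r + s` and positivity of `8K² − 4(2r+s)(s−1)K`, the ratio
`(r+s−1)/r · (K−1)⋯(K−(s−1)) / ((K−(r+1))⋯(K−(r+s−1)))` is bounded above by
`(r+s−1)/r · (1 + (8r(s−1)K + s²(s−1)²)/(8K² − 4(2r+s)(s−1)K))`. -/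
theorem ratio_product_bound (K r s : ℕ) (hs : 2 ≤ s) (hrs : s ≤ r)
    (hKrs : r * s < K) (hK : r + s < K)
    (hden : 0 < 8 * (K : ℚ) ^ 2 - 4 * (2 * r + s) * ((s : ℚ) - 1) * K) :
    (((r : ℚ) + s - 1) / r) *
        ((∏ i ∈ Finset.Icc 1 (s - 1), ((K : ℚ) - i)) /
          (∏ i ∈ Finset.Icc 1 (s - 1), ((K : ℚ) - (r + i)))) ≤
      (((r : ℚ) + s - 1) / r) *
        (1 + (8 * r * ((s : ℚ) - 1) * K + s ^ 2 * ((s : ℚ) - 1) ^ 2) /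
          (8 * (K : ℚ) ^ 2 - 4 * (2 * r + s) * ((s : ℚ) - 1) * K)) :=
  ratio_product_bound_general K r s hs hden
end

section
/- Let K, r, s be positive integers with r ≥ s + 2 and K ≥ (111r − 15s − 111)·rs / (44r − 40s − 44). Then ((r+s−1)/(r−1)) · (1 + 9rs/(8K − 12rs)) ≤ 2.1, i.e., ≤ 21/10. -/
/-! Clearing denominators, `((r+s-1)/(r-1))·(8K-3rs)/(8K-12rs) ≤ 21/10` is equivalent to
`(111r-15s-111)·rs ≤ K·(44r-40s-44)`, so the threshold on `K` is exactly the condition for the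
bound; the only other point is that the same threshold keeps `8K - 12rs` positive. -/

section
variable {α : Type*} [Field α] [LinearOrder α] [IsStrictOrderedRing α] {K r s : α}

lemma scheme2_ratio_le_iff (hr : 0 < r - 1) (hK : 0 < 8 * K - 12 * r * s) :
    (r + s - 1) / (r - 1) * (1 + 9 * r * s / (8 * K - 12 * r * s)) ≤ 21 / 10 ↔
      (111 * r - 15 * s - 111) * r * s ≤ K * (44 * r - 40 * s - 44) := by
  rw [one_add_div hK.ne', div_mul_div_comm, div_le_div_iff₀ (mul_pos hr hK) (by norm_num)]
  constructor <;> intro h <;> linarith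

-- `8·(111r-15s-111) - 12·(44r-40s-44) = 360·(r+s-1)`
lemma twelve_mul_lt_eight_mul_of_threshold_le (hs : 0 < s) (hrs : s + 2 ≤ r)
    (hK : (111 * r - 15 * s - 111) * r * s ≤ K * (44 * r - 40 * s - 44)) :
    12 * r * s < 8 * K := by
  have hrs_pos : 0 < r * s := mul_pos (by linarith) hs
  nlinarith [mul_pos hrs_pos (show 0 < r + s - 1 by linarith)]

end

theorem ratio_bound_scheme2_general (K r s : ℕ) (hs : 0 < s)
    (hrs : s + 2 ≤ r)
    (hbig : (K : ℚ) ≥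
      (111 * r - 15 * s - 111) * r * s / (44 * (r : ℚ) - 40 * s - 44)) :
    (((r : ℚ) + s - 1) / ((r : ℚ) - 1)) *
      (1 + 9 * r * s / (8 * (K : ℚ) - 12 * r * s)) ≤ 21 / 10 := by
  have hs' : (0 : ℚ) < s := by exact_mod_cast hs
  have hrs' : (s : ℚ) + 2 ≤ r := by exact_mod_cast hrs
  have hthreshold := (div_le_iff₀ (by linarith : (0 : ℚ) < 44 * r - 40 * s - 44)).1 hbig
  have hden := twelve_mul_lt_eight_mul_of_threshold_le hs' hrs' hthreshold
  exact (scheme2_ratio_le_iff (by linarith) (by linarith)).2 hthreshold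

/-- If `r ≥ s + 2` and `K ≥ (111r − 15s − 111)·rs/(44r − 40s − 44)`, then
`((r+s−1)/(r−1))·(1 + 9rs/(8K − 12rs)) ≤ 21/10`. -/
theorem ratio_bound_scheme2 (K r s : ℕ) (hK : 0 < K) (hs : 0 < s)
    (hrs : s + 2 ≤ r)
    (hbig : (K : ℚ) ≥
      (111 * r - 15 * s - 111) * r * s / (44 * (r : ℚ) - 40 * s - 44)) :
    (((r : ℚ) + s - 1) / ((r : ℚ) - 1)) *
      (1 + 9 * r * s / (8 * (K : ℚ) - 12 * r * s)) ≤ 21 / 10 :=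
  ratio_bound_scheme2_general K r s hs hrs hbig
end

section
/- Let K, s, Q be positive integers with Q = K/gcd(K,s) and e = sQ/K (so e = s/gcd(K,s) is a positive integer). Assign to each node k ∈ {0,1,...,K−1} the set of output-function indices Q_k = {⟨ke⟩_Q, ⟨ke+1⟩_Q, ..., ⟨(k+1)e−1⟩_Q}, where ⟨a⟩_Q denotes the residue of a modulo Q. Then |Q_k| = e for every k, and every index q ∈ {0,1,...,Q−1} belongs to exactly s of the sets Q_0, ..., Q_{K−1}. -/
/-!
Node `k` receives the window of `e` consecutive integers `ke, …, ke + e - 1`, read modulo `Q`.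
Since `e ≤ Q`, a window never wraps onto itself, so it has `e` distinct residues and contains each
residue at most once. The windows of the `K` nodes tile `[0, Ke)`, so the number of nodes whose
window contains `q` is the number of `n < Ke ≡ q (mod Q)`; as `Ke = Qs`, that is exactly `s`.
-/

open Finset

theorem Finset.sum_range_mul {M : Type*} [AddCommMonoid M] (f : ℕ → M) (m n : ℕ) :
    ∑ x ∈ range (m * n), f x = ∑ k ∈ range m, ∑ i ∈ range n, f (k * n + i) := by
  induction m with
  | zero => simp
  | succ m ih => rw [Nat.succ_mul, sum_range_add, sum_range_succ, ih]

theorem Finset.card_filter_apply_eq_of_injOn {α β : Type*} [DecidableEq β] {s : Finset α}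
    {f : α → β} (hf : Set.InjOn f s) (b : β) :
    #{x ∈ s | f x = b} = if b ∈ s.image f then 1 else 0 := by
  rw [← card_image_of_injOn (hf.mono (filter_subset _ s)), ← filter_image (p := (· = b)), filter_eq',
    apply_ite card, card_singleton, card_empty]

theorem Nat.injOn_add_mod_range {Q e : ℕ} (a : ℕ) (he : e ≤ Q) :
    Set.InjOn (fun i => (a + i) % Q) (range e) := by
  intro i hi j hj hij
  have hiQ : i < Q := (mem_range.mp hi).trans_le he
  have hjQ : j < Q := (mem_range.mp hj).trans_le he
  have hij' := Nat.ModEq.add_left_cancel' a hij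
  rwa [Nat.ModEq, Nat.mod_eq_of_lt hiQ, Nat.mod_eq_of_lt hjQ] at hij'

theorem Nat.card_filter_range_mul_mod_eq {Q q : ℕ} (hq : q < Q) (s : ℕ) :
    #{n ∈ range (Q * s) | n % Q = q} = s := by
  have hQ : 0 < Q := q.zero_le.trans_lt hq
  have := Nat.count_modEq_card (Q * s) hQ q
  rw [Nat.count_eq_card_filter_range, Nat.mul_mod_right, Nat.mul_div_cancel_left s hQ] at this
  simpa [Nat.ModEq, Nat.mod_eq_of_lt hq] using this

theorem Nat.card_filter_mem_windows {Q e : ℕ} (he : e ≤ Q) (K q : ℕ) :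
    #{k ∈ range K | q ∈ (range e).image (fun i => (k * e + i) % Q)} =
      #{n ∈ range (K * e) | n % Q = q} := by
  calc #{k ∈ range K | q ∈ (range e).image (fun i => (k * e + i) % Q)}
      = ∑ k ∈ range K, #{i ∈ range e | (k * e + i) % Q = q} := by
        rw [card_filter]
        exact sum_congr rfl fun k _ =>
          (card_filter_apply_eq_of_injOn (Nat.injOn_add_mod_range (k * e) he) q).symm
    _ = ∑ n ∈ range (K * e), if n % Q = q then 1 else 0 := by
        simp only [card_filter, sum_range_mul]
    _ = #{n ∈ range (K * e) | n % Q = q} := (card_filter _ _).symm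

theorem Nat.mul_div_div_gcd {K : ℕ} (hK : 0 < K) (s : ℕ) :
    s * (K / K.gcd s) / K = s / K.gcd s := by
  rw [← Nat.mul_div_assoc s (Nat.gcd_dvd_left K s), Nat.div_div_eq_div_mul,
    Nat.mul_div_mul_right s _ hK]

theorem output_function_assignment_general (K s Q e : ℕ) (hK : 0 < K)
    (hsK : s ≤ K) (hQ : Q = K / Nat.gcd K s) (he : e = s * Q / K) :
    (∀ k < K, ((Finset.range e).image (fun i => (k * e + i) % Q)).card = e) ∧
    (∀ q < Q, ((Finset.range K).filter
        (fun k => q ∈ (Finset.range e).image (fun i => (k * e + i) % Q))).card = s) := by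
  rw [hQ, Nat.mul_div_div_gcd hK] at he
  have heQ : e ≤ Q := he ▸ hQ ▸ Nat.div_le_div_right hsK
  have hKe : K * e = Q * s := by
    rw [he, hQ, ← Nat.mul_div_assoc K (Nat.gcd_dvd_right K s),
      Nat.div_mul_right_comm (Nat.gcd_dvd_left K s)]
  refine ⟨fun k _ => ?_, fun q hq => ?_⟩
  · rw [card_image_of_injOn (Nat.injOn_add_mod_range (k * e) heQ), card_range]
  · rw [Nat.card_filter_mem_windows heQ, hKe, Nat.card_filter_range_mul_mod_eq hq]

/-- Assigning to node `k` the set of output-function indices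
`Q_k = {⟨ke⟩_Q, …, ⟨(k+1)e−1⟩_Q}` with `Q = K/gcd(K,s)` and `e = sQ/K`,
each `Q_k` has exactly `e` elements and each index `q < Q` belongs to
exactly `s` of the sets `Q_0, …, Q_{K−1}`. -/
theorem output_function_assignment (K s Q e : ℕ) (hK : 0 < K) (hs : 0 < s)
    (hsK : s ≤ K) (hQ : Q = K / Nat.gcd K s) (he : e = s * Q / K) :
    (∀ k < K, ((Finset.range e).image (fun i => (k * e + i) % Q)).card = e) ∧
    (∀ q < Q, ((Finset.range K).filter
        (fun k => q ∈ (Finset.range e).image (fun i => (k * e + i) % Q))).card = s) :=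
  output_function_assignment_general K s Q e hK hsK hQ he
end

section
/- For positive integers K, r, s with r ≥ s, s ≥ 2, and K ≥ 3rs(7r−s+1)/(8(r−s+1)): the ratio H₁(r,s) = [(s/r)(1 − r/K)] / L*(r,s) satisfies H₁(r,s) ≤ 2, where L*(r,s) = Σ_{l = max{r+1,s}}^{min{r+s,K}} [C(K−r, l−r)·C(r, l−s)/C(K,s)]·(l−r)/(l−1). -/
/-!
`L*(r,s)` is at least its last summand `l = r + s`, namely `C(K-r,s)/C(K,s) · s/(r+s-1)`.
Since `C(K-r,s)/C(K,s) = ∏_{i<s} (1 - r/(K-i))`, Bernoulli's inequality applied to the factors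
with `i ≥ 1` gives `C(K-r,s)/C(K,s) ≥ (1 - r/K)(1 - (s-1)r/(K-s+1))`. The factor `1 - r/K`
cancels against the numerator, and what remains is `2r²(s-1) ≤ (r-s+1)(K-s+1)`, which the
lower bound on `K` implies.
-/

open Finset

lemma one_sub_card_mul_le_prod_one_sub {R ι : Type*} [CommRing R] [LinearOrder R]
    [IsStrictOrderedRing R] (s : Finset ι) {f : ι → R} {x : R}
    (hf : ∀ i ∈ s, 0 ≤ f i ∧ f i ≤ x) (hx : x ≤ 1) :
    1 - #s * x ≤ ∏ i ∈ s, (1 - f i) :=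
  calc 1 - #s * x = 1 + #s * (-x) := by ring
    _ ≤ (1 - x) ^ #s := by rw [sub_eq_add_neg]; exact one_add_mul_le_pow (by linarith) _
    _ ≤ ∏ i ∈ s, (1 - f i) := by
      rw [← prod_const]
      exact prod_le_prod (fun _ _ => by linarith) fun i hi => by linarith [hf i hi]

lemma cast_choose_sub_div_cast_choose {𝕜 : Type*} [Field 𝕜] [CharZero 𝕜] {n r s : ℕ}
    (h : r + s ≤ n) :
    ((n - r).choose s : 𝕜) / n.choose s = ∏ i ∈ range s, (1 - r / (n - i : 𝕜)) := by
  induction s with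
  | zero => simp
  | succ s ih =>
    have hsucc : ∀ m, (m.choose (s + 1) : 𝕜) = m.choose s * (m - s : ℕ) / (s + 1) :=
      fun m => by
        rw [eq_div_iff (by norm_cast)]; exact_mod_cast m.choose_succ_right_eq s
    have hns : (n - s : 𝕜) ≠ 0 := by
      rw [sub_ne_zero]; exact_mod_cast (by omega : n ≠ s)
    have hchoose : (n.choose s : 𝕜) ≠ 0 := by exact_mod_cast (Nat.choose_pos (by omega)).ne'
    rw [prod_range_succ, ← ih (by omega), hsucc, hsucc, Nat.cast_sub (by omega),
      Nat.cast_sub (by omega), Nat.cast_sub (by omega)]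
    field_simp
    ring

lemma one_sub_div_mul_le_cast_choose_sub_div_cast_choose {𝕜 : Type*} [Field 𝕜]
    [LinearOrder 𝕜] [IsStrictOrderedRing 𝕜] {n r t : ℕ} (h : r + t + 1 ≤ n) :
    (1 - r / n) * (1 - t * (r / (n - t))) ≤
      ((n - r).choose (t + 1) : 𝕜) / n.choose (t + 1) := by
  have hnt : (r : 𝕜) < n - t := by
    rw [lt_sub_iff_add_lt]; exact_mod_cast (by omega : r + t < n)
  have hr : (0 : 𝕜) ≤ r := r.cast_nonneg
  have ht : (0 : 𝕜) ≤ t := t.cast_nonneg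
  have hbound : ∀ i ∈ range t,
      0 ≤ (r / (n - (i + 1 : ℕ)) : 𝕜) ∧ (r / (n - (i + 1 : ℕ)) : 𝕜) ≤ r / (n - t) :=
    fun i hi => by
      have : ((i + 1 : ℕ) : 𝕜) ≤ t := by exact_mod_cast mem_range.1 hi
      exact ⟨div_nonneg hr (by linarith),
        div_le_div_of_nonneg_left hr (by linarith) (by linarith)⟩
  have hprod := one_sub_card_mul_le_prod_one_sub (range t) hbound
    (div_le_one_of_le₀ hnt.le (by linarith))
  rw [card_range] at hprod
  rw [cast_choose_sub_div_cast_choose (by omega), prod_range_succ', Nat.cast_zero, sub_zero,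
    mul_comm]
  exact mul_le_mul_of_nonneg_right hprod
    (sub_nonneg.2 (div_le_one_of_le₀ (by linarith) (by linarith)))

section OrderedField

variable {𝕜 : Type*} [Field 𝕜] [LinearOrder 𝕜] [IsStrictOrderedRing 𝕜]

lemma two_mul_sq_mul_le_of_div_le {K r t : 𝕜} (ht : 0 ≤ t) (htr : t < r)
    (hK : 3 * r * (t + 1) * (7 * r - t) / (8 * (r - t)) ≤ K) :
    2 * r ^ 2 * t ≤ (r - t) * (K - t) := by
  rw [div_le_iff₀ (by linarith)] at hK
  have hr : 0 ≤ r := by linarith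
  have hrt : 0 ≤ r - t := by linarith
  nlinarith [mul_nonneg (mul_nonneg ht hr) hrt]

lemma div_mul_one_sub_le_two_mul {K r t : 𝕜} (ht : 0 ≤ t) (htr : t < r) (hrK : r ≤ K)
    (h : 2 * r ^ 2 * t ≤ (r - t) * (K - t)) :
    (t + 1) / r * (1 - r / K) ≤
      2 * ((1 - r / K) * (1 - t * (r / (K - t))) * ((t + 1) / (r + t))) := by
  have hr : 0 < r := by linarith
  have hKt : 0 < K - t := by linarith
  have hrK' : 0 ≤ 1 - r / K := sub_nonneg.2 (div_le_one_of_le₀ hrK (by linarith))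
  have key : 1 / r ≤ 2 * (1 - t * (r / (K - t))) / (r + t) := by
    rw [div_le_div_iff₀ hr (by linarith)]
    field_simp
    nlinarith
  calc (t + 1) / r * (1 - r / K) = (1 - r / K) * (t + 1) * (1 / r) := by ring
    _ ≤ (1 - r / K) * (t + 1) * (2 * (1 - t * (r / (K - t))) / (r + t)) := by gcongr
    _ = _ := by ring

end OrderedField

/-- The optimal communication load `L*(r,s)` of Li et al. -/
def optimalLoad (K r s : ℕ) : ℚ :=
  ∑ l ∈ Icc (max (r + 1) s) (min (r + s) K),
    ((Nat.choose (K - r) (l - r) * Nat.choose r (l - s) : ℚ) / (Nat.choose K s : ℚ)) *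
      (((l : ℚ) - r) / ((l : ℚ) - 1))

lemma cast_choose_div_mul_le_optimalLoad {K r t : ℕ} (hK : r + t + 1 ≤ K) :
    ((K - r).choose (t + 1) : ℚ) / K.choose (t + 1) * ((t + 1) / (r + t)) ≤
      optimalLoad K r (t + 1) := by
  have hterm := single_le_sum (f := fun l : ℕ => ((Nat.choose (K - r) (l - r) *
      Nat.choose r (l - (t + 1)) : ℚ) / (Nat.choose K (t + 1) : ℚ)) *
        (((l : ℚ) - r) / ((l : ℚ) - 1)))
    (s := Icc (max (r + 1) (t + 1)) (min (r + (t + 1)) K)) (a := r + (t + 1)) (fun l hl => by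
      have : (r : ℚ) + 1 ≤ l := by exact_mod_cast (max_le_iff.1 (mem_Icc.1 hl).1).1
      exact mul_nonneg (by positivity)
        (div_nonneg (by linarith) (by linarith [r.cast_nonneg (α := ℚ)])))
    (by simp only [mem_Icc]; omega)
  refine Eq.trans_le ?_ hterm
  rw [Nat.add_sub_cancel_left, Nat.add_sub_cancel, Nat.choose_self]
  push_cast
  ring

theorem scheme1_ratio_le_two_general (K r s : ℕ) (hs : 2 ≤ s)
    (hrs : s ≤ r)
    (hbig : (K : ℚ) ≥ 3 * r * s * (7 * r - s + 1) / (8 * ((r : ℚ) - s + 1))) :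
    (((s : ℚ) / r) * (1 - (r : ℚ) / K)) /
      (∑ l ∈ Finset.Icc (max (r + 1) s) (min (r + s) K),
        ((Nat.choose (K - r) (l - r) * Nat.choose r (l - s) : ℚ) /
          (Nat.choose K s : ℚ)) * (((l : ℚ) - r) / ((l : ℚ) - 1))) ≤ 2 := by
  obtain ⟨t, rfl⟩ : ∃ t, s = t + 1 := ⟨s - 1, by omega⟩
  have ht : (1 : ℚ) ≤ t := by exact_mod_cast (by omega : 1 ≤ t)
  have htr : (t : ℚ) < r := by exact_mod_cast (by omega : t < r)
  have hgap := two_mul_sq_mul_le_of_div_le (K := (K : ℚ)) (by linarith) htr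
    (Eq.trans_le (by push_cast; ring) hbig)
  have hK : r + t + 1 ≤ K := by
    have : (r : ℚ) + t + 1 ≤ K := by nlinarith
    exact_mod_cast this
  have hterm := cast_choose_div_mul_le_optimalLoad hK
  have hpos : 0 < optimalLoad K r (t + 1) := by
    have := Nat.choose_pos (by omega : t + 1 ≤ K - r)
    have := Nat.choose_pos (by omega : t + 1 ≤ K)
    exact lt_of_lt_of_le (by positivity) hterm
  change _ / optimalLoad K r (t + 1) ≤ 2
  rw [div_le_iff₀ hpos]
  push_cast
  calc ((t : ℚ) + 1) / r * (1 - r / K)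
      ≤ 2 * ((1 - r / K) * (1 - t * (r / (K - t))) * ((t + 1) / (r + t))) :=
        div_mul_one_sub_le_two_mul (by linarith) htr (by exact_mod_cast (by omega : r ≤ K)) hgap
    _ ≤ 2 * optimalLoad K r (t + 1) := by
      refine mul_le_mul_of_nonneg_left (le_trans ?_ hterm) zero_le_two
      gcongr
      exact one_sub_div_mul_le_cast_choose_sub_div_cast_choose hK

/-- For `r ≥ s ≥ 2` and `K ≥ 3rs(7r−s+1)/(8(r−s+1))`, the ratio
`H₁(r,s) = [(s/r)(1 − r/K)] / L*(r,s)` of the communication load of Scheme 1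
to the optimal load `L*(r,s)` of Li et al. is at most `2`. -/
theorem scheme1_ratio_le_two (K r s : ℕ) (hK : 0 < K) (hs : 2 ≤ s)
    (hrs : s ≤ r)
    (hbig : (K : ℚ) ≥ 3 * r * s * (7 * r - s + 1) / (8 * ((r : ℚ) - s + 1))) :
    (((s : ℚ) / r) * (1 - (r : ℚ) / K)) /
      (∑ l ∈ Finset.Icc (max (r + 1) s) (min (r + s) K),
        ((Nat.choose (K - r) (l - r) * Nat.choose r (l - s) : ℚ) /
          (Nat.choose K s : ℚ)) * (((l : ℚ) - r) / ((l : ℚ) - 1))) ≤ 2 :=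
  scheme1_ratio_le_two_general K r s hs hrs hbig
end
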